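/- arXiv:2404.16321 — 2 statements merged into one kernel-verified Lean document; each statement's English description precedes it below -/
import Mathlib

section
/- The inclusion of the wide subcategory Poly_Cart of polynomial functors and cartesian maps into Poly reflects all colimits: if a cocone in Poly_Cart becomes a colimit cocone in Poly, then it is a colimit cocone in Poly_Cart. -/
universe v u

open CategoryTheory Limits

/-- A morphism of polynomial functors: forwards on positions, backwards on directions. -/
structure PolyHom (p q : PFunctor.{u}) : Type u where
  onPos : p.A → q.A
  onDir : ∀ a : p.A, q.B (onPos a) → p.B a

/-- The category `Poly` of polynomial endofunctors on `Set` and natural transformations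
between them (presented position/direction-wise). -/
instance : Category PFunctor.{u} where
  Hom := PolyHom
  id p := ⟨fun a => a, fun _ d => d⟩
  comp φ ψ := ⟨fun a => ψ.onPos (φ.onPos a), fun a d => φ.onDir a (ψ.onDir (φ.onPos a) d)⟩
  id_comp _ := rfl
  comp_id _ := rfl
  assoc _ _ _ := rfl

/-- Post-composition `q ↦ p ◁ q` with a fixed polynomial `p`, as a functor `Poly ⥤ Poly`.
(`PFunctor.comp p q` is the composite functor `p ∘ q`.) -/
def compL (p : PFunctor.{u}) : PFunctor.{u} ⥤ PFunctor.{u} where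
  obj q := p.comp q
  map φ :=
    { onPos := fun x => ⟨x.1, fun b => φ.onPos (x.2 b)⟩
      onDir := fun x d => ⟨d.1, φ.onDir (x.2 d.1) d.2⟩ }
  map_id _ := rfl
  map_comp _ _ := rfl

/-- Pre-composition `p ↦ p ◁ q` with a fixed polynomial `q`, as a functor `Poly ⥤ Poly`. -/
def compR (q : PFunctor.{u}) : PFunctor.{u} ⥤ PFunctor.{u} where
  obj p := p.comp q
  map φ :=
    { onPos := fun x => ⟨φ.onPos x.1, fun b => x.2 (φ.onDir x.1 b)⟩
      onDir := fun x d => ⟨φ.onDir x.1 d.1, d.2⟩ }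
  map_id _ := rfl
  map_comp _ _ := rfl

/-- Evaluation of polynomial functors at a set `X`, as a functor `Poly ⥤ Set`. -/
def evalPoly (X : Type u) : PFunctor.{u} ⥤ Type u where
  obj p := p.Obj X
  map φ := TypeCat.ofHom fun x => ⟨φ.onPos x.1, fun d => x.2 (φ.onDir x.1 d)⟩
  map_id _ := rfl
  map_comp _ _ := rfl

/-- A map of polynomial functors is cartesian if all the backwards maps on directions
are bijections (equivalently, all naturality squares are pullbacks). -/
def IsCartesian {p q : PFunctor.{u}} (φ : p ⟶ q) : Prop :=
  ∀ a, Function.Bijective (φ.onDir a)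

/-- The wide subcategory `Poly_Cart` of polynomial functors and cartesian maps. -/
def PolyCart : Type (u + 1) := PFunctor.{u}

instance : Category PolyCart.{u} where
  Hom p q := { φ : (show PFunctor.{u} from p) ⟶ (show PFunctor.{u} from q) // IsCartesian φ }
  id p := ⟨𝟙 _, fun _ => Function.bijective_id⟩
  comp φ ψ := ⟨φ.1 ≫ ψ.1, fun a => (φ.2 a).comp (ψ.2 (φ.1.onPos a))⟩
  id_comp _ := rfl
  comp_id _ := rfl
  assoc _ _ _ := rfl

/-- The inclusion functor `Poly_Cart ⥤ Poly`. -/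
def polyCartIncl : PolyCart.{u} ⥤ PFunctor.{u} where
  obj p := p
  map φ := φ.1
  map_id _ := rfl
  map_comp _ _ := rfl

/-! Cocones in `Poly` can be tested against the constant polynomials `A y⁰`, maps into which
are just functions on positions. Testing against `A = Prop` shows that the legs of a colimit cocone
are jointly surjective on positions. At a position `c.ι.app j x` of the colimit, the backwards
map of the induced `c.pt ⟶ q` is then cancelled from the bijection `(c.ι.app j ≫ _).onDir x`
by the bijection `(c.ι.app j).onDir x`. -/

def constPFunctor (A : Type u) : PFunctor.{u} :=
  ⟨A, fun _ => PEmpty⟩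

def toConstPFunctor {p : PFunctor.{u}} {A : Type u} (f : p.A → A) : p ⟶ constPFunctor A :=
  ⟨f, fun _ e => e.elim⟩

theorem constPFunctor.hom_ext {p : PFunctor.{u}} {A : Type u} {φ ψ : p ⟶ constPFunctor A}
    (h : φ.onPos = ψ.onPos) : φ = ψ := by
  obtain ⟨f, φd⟩ := φ
  obtain ⟨g, ψd⟩ := ψ
  subst h
  congr
  funext _ e
  exact e.elim

theorem exists_onPos_eq_of_isColimit {J : Type v} [Category.{v} J] {F : J ⥤ PFunctor.{u}}
    {c : Cocone F} (hc : IsColimit c) (a : c.pt.A) :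
    ∃ (j : J) (x : (F.obj j).A), (c.ι.app j).onPos x = a := by
  let inImage (b : c.pt.A) : ULift.{u} Prop :=
    ⟨∃ (j : J) (x : (F.obj j).A), (c.ι.app j).onPos x = b⟩
  have h : toConstPFunctor inImage = toConstPFunctor fun _ => ⟨True⟩ :=
    hc.hom_ext fun j => constPFunctor.hom_ext <| funext fun x =>
      ULift.ext _ _ (eq_true ⟨j, x, rfl⟩)
  exact of_eq_true (congrArg ULift.down (congrFun (congrArg PolyHom.onPos h) a))

theorem IsCartesian.onDir_bijective_of_comp {p q r : PFunctor.{u}} {φ : p ⟶ q} {ψ : q ⟶ r}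
    (hφ : IsCartesian φ) (hφψ : IsCartesian (φ ≫ ψ)) (a : p.A) :
    Function.Bijective (ψ.onDir (φ.onPos a)) :=
  (Function.Bijective.of_comp_iff' (hφ a) _).mp (hφψ a)

theorem isCartesian_of_isColimit {J : Type v} [Category.{v} J] {F : J ⥤ PFunctor.{u}}
    {c : Cocone F} (hc : IsColimit c) (hcart : ∀ j, IsCartesian (c.ι.app j))
    {q : PFunctor.{u}} (ψ : c.pt ⟶ q) (hψ : ∀ j, IsCartesian (c.ι.app j ≫ ψ)) :
    IsCartesian ψ := by
  intro a
  obtain ⟨j, x, rfl⟩ := exists_onPos_eq_of_isColimit hc a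
  exact (hcart j).onDir_bijective_of_comp (hψ j) x

/-- The inclusion `Poly_Cart ⥤ Poly` of the wide subcategory of
cartesian maps reflects all colimits: if a cocone in `Poly_Cart` becomes a colimit
cocone in `Poly`, then it is a colimit cocone in `Poly_Cart`. -/
theorem polyCartIncl_reflects_colimits {J : Type v} [Category.{v} J]
    (F : J ⥤ PolyCart.{u}) (c : Cocone F)
    (hc : IsColimit (polyCartIncl.mapCocone c)) :
    Nonempty (IsColimit c) := by
  have desc_isCartesian (s : Cocone F) : IsCartesian (hc.desc (polyCartIncl.mapCocone s)) :=
    isCartesian_of_isColimit hc (fun j => (c.ι.app j).2) _ fun j => by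
      rw [hc.fac]
      exact (s.ι.app j).2
  exact ⟨{
    desc := fun s => ⟨hc.desc (polyCartIncl.mapCocone s), desc_isCartesian s⟩
    fac := fun s j => Subtype.ext (hc.fac (polyCartIncl.mapCocone s) j)
    uniq := fun s m hm => Subtype.ext
      (hc.uniq (polyCartIncl.mapCocone s) m.1 fun j => congrArg Subtype.val (hm j)) }⟩
end

section
/- For a filtered diagram p : I → Poly in which all structure maps are cartesian, filtered colimits are computed pointwise: for every set X, the canonical function colim_i (p_i(X)) → (colim_i p_i)(X) is a bijection. -/
universe v u

open CategoryTheory Limits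

/-!
Colimits in `Poly` exist for every diagram: the positions form the colimit of the position sets,
and a direction at a position `x` is a compatible family of directions at all representatives
of `x` (a limit over the connected component of `x`).

When the diagram is filtered with cartesian structure maps, the total spaces `Σ a, B a` also
form a filtered diagram of sets, along the inverses of the direction maps. In its colimit two
directions at the same representative become identified only if they are equal, and every
direction at one representative is identified with one at any other representative. Hence a
compatible family is determined by, and can be freely prescribed at, a single representative:
the colimit legs are cartesian. For the evaluation at `X` the filtered-colimit criterion for
sets then holds: an element `⟨x, f⟩` lifts along a cartesian leg, and two elements identified in
the colimit become equal at a stage where their positions agree, since the leg there is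
surjective on directions.
-/

theorem PolyHom.ext_sigma {p q : PFunctor.{u}} {φ ψ : p ⟶ q}
    (h : ∀ a, (⟨φ.onPos a, φ.onDir a⟩ : Σ b, q.B b → p.B a) = ⟨ψ.onPos a, ψ.onDir a⟩) :
    φ = ψ := by
  obtain ⟨f, g⟩ := φ
  obtain ⟨f', g'⟩ := ψ
  obtain rfl : f = f' := funext fun a => congrArg Sigma.fst (h a)
  obtain rfl : g = g' := funext fun a => eq_of_heq (Sigma.mk.inj (h a)).2
  rfl

theorem PolyHom.congr_onDir {p q : PFunctor.{u}} {φ ψ : p ⟶ q} (h : φ = ψ) (a : p.A)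
    {d : q.B (φ.onPos a)} {d' : q.B (ψ.onPos a)} (hd : HEq d d') :
    φ.onDir a d = ψ.onDir a d' := by
  subst h
  rw [eq_of_heq hd]

def positions : PFunctor.{u} ⥤ Type u where
  obj p := p.A
  map φ := TypeCat.ofHom φ.onPos

theorem eq_of_evalPoly_map_eq {X : Type u} {p q : PFunctor.{u}} {φ : p ⟶ q}
    (hφ : ∀ a, Function.Surjective (φ.onDir a)) {z w : p.Obj X} (hzw : z.1 = w.1)
    (h : (evalPoly X).map φ z = (evalPoly X).map φ w) : z = w := by
  obtain ⟨a, f⟩ := z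
  obtain ⟨a', f'⟩ := w
  subst hzw
  have hf : f ∘ φ.onDir a = f' ∘ φ.onDir a := eq_of_heq (Sigma.mk.inj h).2
  rw [(hφ a).injective_comp_right hf]

theorem exists_evalPoly_map_eq {X : Type u} {p q : PFunctor.{u}} {φ : p ⟶ q} {a : p.A}
    (hφ : Function.Bijective (φ.onDir a)) (f : q.B (φ.onPos a) → X) :
    ∃ g, (evalPoly X).map φ ⟨a, g⟩ = ⟨φ.onPos a, f⟩ :=
  ⟨f ∘ (Equiv.ofBijective _ hφ).symm,
    congrArg (Sigma.mk _) (funext fun e => congrArg f ((Equiv.ofBijective _ hφ).symm_apply_apply e))⟩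

namespace PolyColim

variable {J : Type u} [Category.{v} J] (D : J ⥤ PFunctor.{u})

abbrev Pos : Type u := (D ⋙ positions).ColimitType

abbrev ιPos (j : J) (b : (D.obj j).A) : Pos D := (D ⋙ positions).ιColimitType j b

theorem ιPos_map {j k : J} (φ : j ⟶ k) (b : (D.obj j).A) :
    ιPos D k ((D.map φ).onPos b) = ιPos D j b :=
  (D ⋙ positions).ιColimitType_map φ b

def Dir (x : Pos D) : Type u :=
  { s : ∀ (j : J) (b : (D.obj j).A), ιPos D j b = x → (D.obj j).B b //
    ∀ (j k : J) (φ : j ⟶ k) (b : (D.obj j).A) (h : ιPos D k ((D.map φ).onPos b) = x),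
      s j b ((ιPos_map D φ b).symm.trans h) = (D.map φ).onDir b (s k _ h) }

def poly : PFunctor.{u} := ⟨Pos D, Dir D⟩

variable {D}

@[ext]
theorem Dir.ext {x : Pos D} {s t : Dir D x} (h : ∀ j b hb, s.1 j b hb = t.1 j b hb) : s = t :=
  Subtype.ext (funext fun j => funext fun b => funext (h j b))

theorem Dir.sigma_eval_eq {j : J} {b : (D.obj j).A} {x : Pos D} (h : ιPos D j b = x) :
    (⟨x, fun s => s.1 j b h⟩ : Σ y, Dir D y → (D.obj j).B b) =
      ⟨ιPos D j b, fun s => s.1 j b rfl⟩ := by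
  subst h
  rfl

variable (D) in
def cocone : Cocone D where
  pt := poly D
  ι.app j := ⟨ιPos D j, fun b s => s.1 j b rfl⟩
  ι.naturality j k φ := by
    refine PolyHom.ext_sigma fun b => Eq.trans ?_ (Dir.sigma_eval_eq (ιPos_map D φ b).symm)
    exact congrArg (Sigma.mk _) (funext fun s => (s.2 j k φ b rfl).symm)

def descPos (s : Cocone D) : Pos D → s.pt.A :=
  (D ⋙ positions).descColimitType
    ((D ⋙ positions).coconeTypesEquiv.symm (positions.mapCocone s))

def desc (s : Cocone D) : poly D ⟶ s.pt where
  onPos := descPos s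
  onDir _ e :=
    ⟨fun j b h => (s.ι.app j).onDir b (cast (congrArg (s.pt.B ∘ descPos s) h.symm) e),
      fun _ _ φ b _ =>
        PolyHom.congr_onDir (s.w φ).symm b ((cast_heq _ _).trans (cast_heq _ _).symm)⟩

theorem desc_unique (s : Cocone D) (m : poly D ⟶ s.pt)
    (hm : ∀ j, (cocone D).ι.app j ≫ m = s.ι.app j) : m = desc s := by
  refine PolyHom.ext_sigma fun x => ?_
  have hpos : m.onPos x = descPos s x := by
    obtain ⟨j, b, rfl⟩ := (D ⋙ positions).ιColimitType_jointly_surjective x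
    exact congrArg (fun χ => PolyHom.onPos χ b) (hm j)
  refine Sigma.ext hpos (Function.hfunext (congrArg s.pt.B hpos) fun e e' he => ?_)
  refine heq_of_eq (Dir.ext fun j b h => ?_)
  subst h
  exact PolyHom.congr_onDir (hm j) b (he.trans (cast_heq _ _).symm)

variable (D) in
def isColimit : IsColimit (cocone D) where
  desc := desc
  fac _ _ := rfl
  uniq := desc_unique

end PolyColim

noncomputable def IsCartesian.dirEquiv {p q : PFunctor.{u}} {φ : p ⟶ q} (hφ : IsCartesian φ)
    (a : p.A) : q.B (φ.onPos a) ≃ p.B a :=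
  Equiv.ofBijective _ (hφ a)

@[simp]
theorem IsCartesian.dirEquiv_apply {p q : PFunctor.{u}} {φ : p ⟶ q} (hφ : IsCartesian φ)
    (a : p.A) (e : q.B (φ.onPos a)) : hφ.dirEquiv a e = φ.onDir a e := rfl

namespace PolyCart

/-- The total space `Σ a, B a` of directions, made covariant by inverting the direction maps. -/
noncomputable def totalDir : PolyCart.{u} ⥤ Type u where
  obj p := Σ a : (polyCartIncl.obj p).A, (polyCartIncl.obj p).B a
  map φ := TypeCat.ofHom fun z => ⟨φ.1.onPos z.1, (φ.2.dirEquiv z.1).symm z.2⟩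
  map_id p := by
    ext ⟨a, d⟩
    · rfl
    · exact heq_of_eq ((Equiv.symm_apply_eq _).mpr rfl)
  map_comp φ ψ := by
    ext ⟨a, d⟩
    · rfl
    · refine heq_of_eq ((Equiv.symm_apply_eq _).mpr ?_)
      change d = φ.1.onDir a (ψ.1.onDir _ ((ψ.2.dirEquiv _).symm ((φ.2.dirEquiv a).symm d)))
      rw [← ψ.2.dirEquiv_apply, Equiv.apply_symm_apply]
      exact ((φ.2.dirEquiv a).apply_symm_apply d).symm

variable {p q : PolyCart.{u}} (φ : p ⟶ q) (a : (polyCartIncl.obj p).A)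

theorem totalDir_map_mk_onDir (e : (polyCartIncl.obj q).B (φ.1.onPos a)) :
    totalDir.map φ ⟨a, φ.1.onDir a e⟩ = ⟨φ.1.onPos a, e⟩ :=
  congrArg (Sigma.mk _) ((φ.2.dirEquiv a).symm_apply_apply e)

theorem totalDir_map_mk_injective {d d' : (polyCartIncl.obj p).B a}
    (h : totalDir.map φ ⟨a, d⟩ = totalDir.map φ ⟨a, d'⟩) : d = d' :=
  (φ.2.dirEquiv a).symm.injective (eq_of_heq (Sigma.mk.inj h).2)

theorem exists_totalDir_map_mk_eq (y : totalDir.obj q) (hy : y.1 = φ.1.onPos a) :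
    ∃ d, totalDir.map φ ⟨a, d⟩ = y := by
  obtain ⟨c, e⟩ := y
  subst hy
  exact ⟨_, totalDir_map_mk_onDir φ a e⟩

end PolyCart

namespace PolyColim

open PolyCart

variable {I : Type u} [Category.{v} I] {F : I ⥤ PolyCart.{u}}

local notation "P" => F ⋙ polyCartIncl

variable (F) in
noncomputable abbrev ιTotalDir (j : I) (b : ((P).obj j).A) (e : ((P).obj j).B b) : (F ⋙ totalDir).ColimitType :=
  (F ⋙ totalDir).ιColimitType j ⟨b, e⟩

theorem ιTotalDir_onDir {j k : I} (φ : j ⟶ k) (b : ((P).obj j).A)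
    (e : ((P).obj k).B (((P).map φ).onPos b)) :
    ιTotalDir F j b (((P).map φ).onDir b e) = ιTotalDir F k (((P).map φ).onPos b) e :=
  ((F ⋙ totalDir).ιColimitType_map φ _).symm.trans
    (congrArg ((F ⋙ totalDir).ιColimitType k) (totalDir_map_mk_onDir (F.map φ) b e))

theorem Dir.ιTotalDir_eq_of_map {x : Pos P} (s : Dir P x) {j k : I} (φ : j ⟶ k)
    (b : ((P).obj j).A) (h : ιPos P j b = x) (h' : ιPos P k (((P).map φ).onPos b) = x) :
    ιTotalDir F j b (s.1 j b h) = ιTotalDir F k (((P).map φ).onPos b) (s.1 k _ h') :=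
  (congrArg (ιTotalDir F j b) (s.2 j k φ b h')).trans (ιTotalDir_onDir φ b _)

theorem Dir.ιTotalDir_congr {x : Pos P} (s : Dir P x) {k : I} {c c' : ((P).obj k).A}
    (hc : c = c') (h : ιPos P k c = x) (h' : ιPos P k c' = x) :
    ιTotalDir F k c (s.1 k c h) = ιTotalDir F k c' (s.1 k c' h') := by
  subst hc
  rfl

variable [IsFiltered I]

theorem ιTotalDir_injective {j : I} {b : ((P).obj j).A} {e e' : ((P).obj j).B b}
    (h : ιTotalDir F j b e = ιTotalDir F j b e') : e = e' := by
  obtain ⟨k, f, hf⟩ := ((F ⋙ totalDir).ιColimitType_eq_iff_of_isFiltered' _ _).mp h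
  exact totalDir_map_mk_injective (F.map f) b hf

theorem exists_ιTotalDir_eq {i j : I} {a : ((P).obj i).A} {b : ((P).obj j).A}
    (h : ιPos P i a = ιPos P j b) (d : ((P).obj i).B a) :
    ∃ e, ιTotalDir F j b e = ιTotalDir F i a d := by
  obtain ⟨k, u, v, huv⟩ := ((P ⋙ positions).ιColimitType_eq_iff_of_isFiltered _ _).mp h
  obtain ⟨e, he⟩ := exists_totalDir_map_mk_eq (F.map v) b ((F ⋙ totalDir).map u ⟨a, d⟩) huv
  refine ⟨e, ?_⟩
  calc ιTotalDir F j b e = (F ⋙ totalDir).ιColimitType k ((F ⋙ totalDir).map v ⟨b, e⟩) :=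
        ((F ⋙ totalDir).ιColimitType_map v _).symm
    _ = (F ⋙ totalDir).ιColimitType k ((F ⋙ totalDir).map u ⟨a, d⟩) := congrArg _ he
    _ = ιTotalDir F i a d := (F ⋙ totalDir).ιColimitType_map u _

theorem Dir.ιTotalDir_eq {x : Pos P} (s : Dir P x) {i j : I} {a : ((P).obj i).A}
    {b : ((P).obj j).A} (ha : ιPos P i a = x) (hb : ιPos P j b = x) :
    ιTotalDir F i a (s.1 i a ha) = ιTotalDir F j b (s.1 j b hb) := by
  obtain ⟨k, u, v, huv⟩ :=
    ((P ⋙ positions).ιColimitType_eq_iff_of_isFiltered _ _).mp (ha.trans hb.symm)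
  have hu : ιPos P k (((P).map u).onPos a) = x := (ιPos_map P u a).trans ha
  have hv : ιPos P k (((P).map v).onPos b) = x := (ιPos_map P v b).trans hb
  calc ιTotalDir F i a (s.1 i a ha)
      = ιTotalDir F k _ (s.1 k _ hu) := s.ιTotalDir_eq_of_map u a ha hu
    _ = ιTotalDir F k _ (s.1 k _ hv) := s.ιTotalDir_congr huv hu hv
    _ = ιTotalDir F j b (s.1 j b hb) := (s.ιTotalDir_eq_of_map v b hb hv).symm

noncomputable def transportDir {i : I} {a : ((P).obj i).A} (d : ((P).obj i).B a) (j : I)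
    (b : ((P).obj j).A) (h : ιPos P j b = ιPos P i a) : ((P).obj j).B b :=
  (exists_ιTotalDir_eq h.symm d).choose

theorem ιTotalDir_transportDir {i : I} {a : ((P).obj i).A} (d : ((P).obj i).B a) (j : I)
    (b : ((P).obj j).A) (h : ιPos P j b = ιPos P i a) :
    ιTotalDir F j b (transportDir d j b h) = ιTotalDir F i a d :=
  (exists_ιTotalDir_eq h.symm d).choose_spec

noncomputable def Dir.lift {i : I} {a : ((P).obj i).A} (d : ((P).obj i).B a) :
    Dir P (ιPos P i a) :=
  ⟨transportDir d, fun j k φ b h => ιTotalDir_injective <|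
    (ιTotalDir_transportDir d j b _).trans <|
      (ιTotalDir_transportDir d k _ h).symm.trans (ιTotalDir_onDir φ b _).symm⟩

theorem Dir.lift_apply {i : I} {a : ((P).obj i).A} (d : ((P).obj i).B a) :
    (Dir.lift d).1 i a rfl = d :=
  ιTotalDir_injective (ιTotalDir_transportDir d i a rfl)

theorem cocone_ι_isCartesian (i : I) : IsCartesian ((cocone P).ι.app i) := fun a =>
  ⟨fun s t hst => Dir.ext fun j b h => ιTotalDir_injective <| by
      rw [← s.ιTotalDir_eq rfl h, ← t.ιTotalDir_eq rfl h]
      exact congrArg (ιTotalDir F i a) hst,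
    fun d => ⟨Dir.lift d, Dir.lift_apply d⟩⟩

variable (F) in
noncomputable def isColimitEvalCocone (X : Type u) :
    IsColimit ((evalPoly X).mapCocone (cocone P)) := by
  refine Types.FilteredColimit.isColimitOf _ _ (fun ⟨x, f⟩ => ?_) (fun i j z w h => ?_)
  · obtain ⟨i, a, rfl⟩ := (P ⋙ positions).ιColimitType_jointly_surjective x
    obtain ⟨g, hg⟩ := exists_evalPoly_map_eq (cocone_ι_isCartesian i a) f
    exact ⟨i, ⟨a, g⟩, hg.symm⟩
  · obtain ⟨k, u, v, huv⟩ :=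
      ((P ⋙ positions).ιColimitType_eq_iff_of_isFiltered _ _).mp (congrArg Sigma.fst h)
    refine ⟨k, u, v, eq_of_evalPoly_map_eq (fun a => (cocone_ι_isCartesian k a).2) huv ?_⟩
    exact (ConcreteCategory.congr_hom (((evalPoly X).mapCocone (cocone P)).w u) z).trans
      (h.trans (ConcreteCategory.congr_hom (((evalPoly X).mapCocone (cocone P)).w v) w).symm)

end PolyColim

/-- For a filtered diagram in `Poly` all of whose structure maps are
cartesian, colimits are computed pointwise: for every set `X`, evaluation at `X` sends
any colimit cocone (in `Poly`) to a colimit cocone of sets.  That is, the canonical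
function `colim_i (p_i(X)) → (colim_i p_i)(X)` is a bijection. -/
theorem eval_preserves_filtered_cartesian_colimits {I : Type u} [Category.{u} I]
    [IsFiltered I] (F : I ⥤ PolyCart.{u})
    (c : Cocone (F ⋙ polyCartIncl)) (hc : IsColimit c) (X : Type u) :
    Nonempty (IsColimit ((evalPoly X).mapCocone c)) :=
  ⟨IsColimit.ofIsoColimit (PolyColim.isColimitEvalCocone F X)
    ((Cocone.functoriality _ (evalPoly X)).mapIso ((PolyColim.isColimit _).uniqueUpToIso hc))⟩
end
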